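/- Let n ≥ 1 and, for 0 ≤ k < n, let r_k be the ray with apex the origin and direction (cos(2πk/n), sin(2πk/n)). Then sSup { min_{0 ≤ k < n} d∠(x, r_k) : x ∈ ℝ² } = 2π/n; that is, the lower bound 2π/n for the Brocard angle of the plane is attained by n rays with a common apex whose consecutive directions differ by 2π/n. -/

import Mathlib

/-!
Measure polar angles from the direction `(1, 0)`. A point `x ≠ 0` of polar angle `θ` lies at
angular distance `(θ - 2πk/n) mod 2π` from the ray `r_k`, and the minimum of these over
`0 ≤ k < n` is `θ mod 2π/n`. So the values of `min_k d∠(x, r_k)` fill exactly `[0, 2π/n)`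
(the apex giving `0`), whose supremum is `2π/n`.
-/

noncomputable section

open Real

abbrev Pt : Type := EuclideanSpace ℝ (Fin 2)

instance : Fact (Module.finrank ℝ Pt = 2) := ⟨finrank_euclideanSpace_fin⟩

noncomputable def stdOrient : Orientation ℝ Pt (Fin 2) :=
  (EuclideanSpace.basisFun (Fin 2) ℝ).toBasis.orientation

/-- A ray in the plane, given by its apex and its direction vector. -/
structure Ray2 where
  apex : Pt
  dir : Pt

/-- The set of points of a ray. -/
def Ray2.carrier (r : Ray2) : Set Pt := {x | ∃ t : ℝ, 0 ≤ t ∧ x = r.apex + t • r.dir}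

/-- The representative in `[0, 2π)` of an angle. -/
noncomputable def angleIco (θ : Real.Angle) : ℝ :=
  if 0 ≤ θ.toReal then θ.toReal else θ.toReal + 2 * π

open Classical in
/-- The counterclockwise angular distance from a point `x` to a ray `r`. -/
noncomputable def adist (x : Pt) (r : Ray2) : ℝ :=
  if x = r.apex then 0 else angleIco (stdOrient.oangle r.dir (x - r.apex))

/-- The Voronoi region of a ray `r` in a finite set of rays `R`. -/
def rreg (R : Finset Ray2) (r : Ray2) : Set Pt :=
  {x | ∀ s ∈ R, s ≠ r → adist x r < adist x s}

/-- The rotating rays Voronoi diagram. -/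
def RVD (R : Finset Ray2) : Set Pt :=
  (Set.univ \ ⋃ r ∈ R, rreg R r) ∪ ⋃ r ∈ R, r.carrier

/-- The point of the plane with the given coordinates. -/
noncomputable def pt (a b : ℝ) : Pt := (WithLp.equiv 2 (Fin 2 → ℝ)).symm ![a, b]

section

variable {α : Type*} [Field α] [LinearOrder α] [IsStrictOrderedRing α] [Archimedean α]

lemma toIcoMod_zero_le_self {p : α} (hp : 0 < p) {v : α} (hv : 0 ≤ v) :
    toIcoMod hp 0 v ≤ v := by
  rw [← self_sub_toIcoDiv_zsmul, sub_le_self_iff]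
  have : 0 ≤ toIcoDiv hp 0 v := by
    by_contra! h
    have h' : (toIcoDiv hp 0 v : α) ≤ -1 := by exact_mod_cast Int.le_sub_one_of_lt h
    have := (toIcoMod_mem_Ico' hp v).2
    rw [← self_sub_toIcoDiv_zsmul, zsmul_eq_mul] at this
    nlinarith
  exact zsmul_nonneg hp.le this

lemma inf'_toIcoMod_sub_mul_div {q : α} (hq : 0 < q) {n : ℕ} (hn : 0 < n) (t : α) :
    (Finset.range n).inf' (Finset.nonempty_range_iff.mpr hn.ne')
        (fun k => toIcoMod hq 0 (t - q * k / n)) =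
      toIcoMod (div_pos hq (Nat.cast_pos.mpr hn)) 0 t := by
  have hn' : (0 : α) < n := Nat.cast_pos.mpr hn
  set c := q / n
  have hc : 0 < c := div_pos hq hn'
  have hq_eq : q = n * c := by simp only [c]; field_simp
  set s := toIcoMod hc 0 t
  set m := toIcoDiv hc 0 t
  apply le_antisymm
  -- the minimum is attained at the index `k ≡ toIcoDiv hc 0 t (mod n)`
  · have ht : t = s + m * c := by
      rw [← zsmul_eq_mul]; exact (toIcoMod_add_toIcoDiv_zsmul hc 0 t).symm
    have hm : m = m % n + n * (m / n) := (Int.emod_add_mul_ediv m n).symm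
    have hk0 : 0 ≤ m % n := Int.emod_nonneg m (by exact_mod_cast hn.ne')
    have hkn : m % n < n := Int.emod_lt_of_pos m (by exact_mod_cast hn)
    have hk : (((m % n).toNat : ℕ) : α) = ((m % n : ℤ) : α) := by
      exact_mod_cast Int.toNat_of_nonneg hk0
    refine (Finset.inf'_le _ (Finset.mem_range.mpr (by omega : (m % n).toNat < n))).trans_eq ?_
    have hs := toIcoMod_mem_Ico' hc t
    rw [toIcoMod_eq_iff]
    refine ⟨⟨hs.1, ?_⟩, m / n, ?_⟩
    · rw [zero_add, hq_eq]; nlinarith [(Nat.one_le_cast (α := α)).mpr hn, hs.2]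
    · have hm' : (m : α) = (m % n : ℤ) + n * (m / n : ℤ) := by exact_mod_cast hm
      rw [zsmul_eq_mul, hk, ht, hq_eq, hm']
      field_simp
      ring
  -- each term is nonnegative and congruent to `t` modulo `c`
  · refine Finset.le_inf' _ _ fun k _ => ?_
    calc s = toIcoMod hc 0 (toIcoMod hq 0 (t - q * k / n)) := by
          rw [toIcoMod_eq_toIcoMod, ← self_sub_toIcoDiv_zsmul]
          refine ⟨-k - toIcoDiv hq 0 (t - q * k / n) * n, ?_⟩
          rw [zsmul_eq_mul, zsmul_eq_mul]
          push_cast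
          simp only [c]
          field_simp
          ring
      _ ≤ _ := toIcoMod_zero_le_self hc (left_le_toIcoMod ..)

end

lemma angleIco_mem_Ico (θ : Real.Angle) : angleIco θ ∈ Set.Ico 0 (2 * π) := by
  have := θ.neg_pi_lt_toReal
  have := θ.toReal_le_pi
  unfold angleIco
  split_ifs <;> constructor <;> linarith [pi_pos]

lemma coe_angleIco (θ : Real.Angle) : ((angleIco θ : ℝ) : Real.Angle) = θ := by
  unfold angleIco
  split_ifs
  · exact θ.coe_toReal
  · rw [Real.Angle.coe_add, Real.Angle.coe_two_pi, add_zero, θ.coe_toReal]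

lemma angleIco_coe (x : ℝ) : angleIco x = toIcoMod two_pi_pos 0 x := by
  obtain ⟨k, hk⟩ := Real.Angle.angle_eq_iff_two_pi_dvd_sub.mp (coe_angleIco x)
  refine ((toIcoMod_eq_iff two_pi_pos).mpr ⟨by simpa using angleIco_mem_Ico x, -k, ?_⟩).symm
  rw [zsmul_eq_mul]
  push_cast
  linarith

@[simp] lemma pt_apply_zero (a b : ℝ) : pt a b 0 = a := rfl

@[simp] lemma pt_apply_one (a b : ℝ) : pt a b 1 = b := rfl

lemma inner_pt (a b c d : ℝ) : inner ℝ (pt a b) (pt c d) = a * c + b * d := by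
  simp [pt, PiLp.inner_apply, Fin.sum_univ_two]
  ring

lemma areaForm_apply (x y : Pt) : stdOrient.areaForm x y = x 0 * y 1 - x 1 * y 0 := by
  rw [Orientation.areaForm_to_volumeForm,
    stdOrient.volumeForm_robust (EuclideanSpace.basisFun (Fin 2) ℝ) rfl,
    Module.Basis.det_apply, Matrix.det_fin_two]
  simp [Module.Basis.toMatrix_apply]
  ring

lemma pt_cos_sin_ne_zero (a : ℝ) : pt (cos a) (sin a) ≠ 0 := by
  intro h
  have h0 : cos a = 0 := congrArg (· 0) h
  have h1 : sin a = 0 := congrArg (· 1) h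
  simpa [h0, h1] using sin_sq_add_cos_sq a

lemma oangle_pt_cos_sin (a b : ℝ) :
    stdOrient.oangle (pt (cos a) (sin a)) (pt (cos b) (sin b)) = ((b - a : ℝ) : Real.Angle) := by
  have hk : stdOrient.kahler (pt (cos a) (sin a)) (pt (cos b) (sin b)) =
      (cos (b - a) : ℂ) + (sin (b - a) : ℂ) * Complex.I := by
    rw [Orientation.kahler_apply_apply, areaForm_apply, inner_pt, pt_apply_zero, pt_apply_zero,
      pt_apply_one, pt_apply_one, cos_sub, sin_sub, Complex.real_smul]
    push_cast
    ring
  rw [Orientation.oangle, hk]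
  have := Complex.arg_cos_add_sin_mul_I_coe_angle ((b - a : ℝ) : Real.Angle)
  rwa [Real.Angle.cos_coe, Real.Angle.sin_coe] at this

lemma adist_apex (x d : Pt) : adist x ⟨x, d⟩ = 0 := if_pos rfl

lemma adist_origin_ray {x : Pt} (hx : x ≠ 0) {θ : ℝ} (hθ : stdOrient.oangle (pt 1 0) x = θ)
    (a : ℝ) : adist x ⟨0, pt (cos a) (sin a)⟩ = toIcoMod two_pi_pos 0 (θ - a) := by
  have he : pt 1 0 = pt (cos 0) (sin 0) := by rw [cos_zero, sin_zero]
  rw [he] at hθ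
  have hsplit := stdOrient.oangle_add (pt_cos_sin_ne_zero a) (pt_cos_sin_ne_zero 0) hx
  rw [oangle_pt_cos_sin, hθ, ← Real.Angle.coe_add, zero_sub, neg_add_eq_sub] at hsplit
  rw [adist, if_neg hx, sub_zero, ← hsplit, angleIco_coe]

lemma inf'_adist_origin_rays {n : ℕ} (hn : 0 < n) {x : Pt} (hx : x ≠ 0) {θ : ℝ}
    (hθ : stdOrient.oangle (pt 1 0) x = θ) :
    (Finset.range n).inf' (Finset.nonempty_range_iff.mpr hn.ne')
        (fun k => adist x ⟨0, pt (cos (2 * π * k / n)) (sin (2 * π * k / n))⟩) =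
      toIcoMod (div_pos two_pi_pos (Nat.cast_pos.mpr hn)) 0 θ := by
  simp_rw [adist_origin_ray hx hθ]
  exact inf'_toIcoMod_sub_mul_div two_pi_pos hn θ

/-- `n` rays with a common apex whose consecutive directions differ by `2π/n`
attain the lower bound `2π/n` for the Brocard angle of the plane. -/
theorem stmt6 (n : ℕ) (hn : 1 ≤ n) :
    sSup {y : ℝ | ∃ x : Pt,
        y = (Finset.range n).inf' (Finset.nonempty_range_iff.mpr (by omega))
          fun k => adist x ⟨0, pt (cos (2 * π * k / n)) (sin (2 * π * k / n))⟩} =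
      2 * π / n := by
  have hc : 0 < 2 * π / n := div_pos two_pi_pos (Nat.cast_pos.mpr hn)
  rw [← csSup_Ico hc]
  congr 1
  ext y
  constructor
  · rintro ⟨x, rfl⟩
    rcases eq_or_ne x 0 with rfl | hx
    · simpa [adist_apex] using hc
    · rw [inf'_adist_origin_rays hn hx (stdOrient.oangle (pt 1 0) x).coe_toReal.symm]
      exact toIcoMod_mem_Ico' _ _
  · intro hy
    have hθ : stdOrient.oangle (pt 1 0) (pt (cos y) (sin y)) = y := by
      simpa using oangle_pt_cos_sin 0 y
    refine ⟨pt (cos y) (sin y), ?_⟩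
    rw [inf'_adist_origin_rays hn (pt_cos_sin_ne_zero y) hθ, (toIcoMod_eq_self _).mpr]
    simpa using hy
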